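/- arXiv:math/0512006 — 8 statements merged into one kernel-verified Lean document; each statement's English description precedes it below -/
import Mathlib

section
/- Let λ be a 3-adic integer with λ not divisible by 3, and let k ≥ 1. Then among n = 1, 2, ..., 2·3^{k−1}, exactly 2^{k−1} values of n have the property that the first k ternary digits of λ·2^n (i.e., λ·2^n mod 3^k) omit the digit 2. -/
/-! 2 is a primitive root modulo `3 ^ k`: it is `-1 * (1 - 3)`, a product of commuting
elements of coprime orders `2` and `3 ^ (k - 1)`. Hence as `n` runs over one period
`1, …, 2 * 3 ^ (k - 1)`, the residue of `λ * 2 ^ n` runs exactly once over the units of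
`ZMod (3 ^ k)`, i.e. over the `m < 3 ^ k` whose last ternary digit is nonzero. If all digits
lie in `{0, 1}`, the last one must be `1` and the other `k - 1` are free, which leaves
`2 ^ (k - 1)` residues. -/

/-- The `j`-th digit of the 3-adic expansion of `y`. -/
noncomputable def padicDigit (y : ℤ_[3]) (j : ℕ) : ℕ := y.appr (j + 1) / 3 ^ j % 3

open Finset

namespace Nat

theorem forall_digits_mem_iff {b : ℕ} (hb : 1 < b) {D : Finset ℕ} (hD0 : 0 ∈ D) (m : ℕ) :
    (∀ d ∈ b.digits m, d ∈ D) ↔ m % b ∈ D ∧ ∀ d ∈ b.digits (m / b), d ∈ D := by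
  rcases Nat.eq_zero_or_pos m with rfl | hm
  · simp [hD0]
  · simp [Nat.digits_def' hb hm]

theorem card_filter_mod_mem_digits_mem {b : ℕ} (hb : 1 < b) {D L : Finset ℕ} (hD0 : 0 ∈ D)
    (hDb : ∀ d ∈ D, d < b) (hLD : L ⊆ D) (k : ℕ) :
    #{m ∈ range (b ^ (k + 1)) | m % b ∈ L ∧ ∀ d ∈ b.digits m, d ∈ D}
      = #L * #{m ∈ range (b ^ k) | ∀ d ∈ b.digits m, d ∈ D} := by
  have hb0 : 0 < b := by omega
  have hsplit : ∀ r q, r < b → (r + b * q) % b = r ∧ (r + b * q) / b = q := fun r q hr =>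
    ⟨by rw [Nat.add_mul_mod_self_left, Nat.mod_eq_of_lt hr],
      by rw [Nat.add_mul_div_left _ _ hb0, Nat.div_eq_of_lt hr, zero_add]⟩
  rw [← card_product]
  refine card_nbij' (fun m => (m % b, m / b)) (fun rq => rq.1 + b * rq.2) ?_ ?_ ?_ ?_
  · intro m hm
    simp only [mem_coe, mem_filter, mem_range, mem_product] at hm ⊢
    rw [forall_digits_mem_iff hb hD0] at hm
    refine ⟨hm.2.1, ?_, hm.2.2.2⟩
    rw [Nat.div_lt_iff_lt_mul hb0, ← pow_succ]
    exact hm.1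
  · rintro ⟨r, q⟩ hrq
    simp only [mem_coe, mem_filter, mem_range, mem_product] at hrq ⊢
    obtain ⟨hr, hq, hqD⟩ := hrq
    obtain ⟨hmod, hdiv⟩ := hsplit r q (hDb r (hLD hr))
    refine ⟨?_, by rwa [hmod], ?_⟩
    · calc r + b * q < b + b * q := by linarith [hDb r (hLD hr)]
        _ = b * (q + 1) := by ring
        _ ≤ b * b ^ k := Nat.mul_le_mul_left _ hq
        _ = b ^ (k + 1) := by ring
    · rw [forall_digits_mem_iff hb hD0, hmod, hdiv]
      exact ⟨hLD hr, hqD⟩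
  · intro m _
    exact Nat.mod_add_div m b
  · rintro ⟨r, q⟩ hrq
    simp only [mem_coe, mem_product] at hrq
    obtain ⟨hmod, hdiv⟩ := hsplit r q (hDb r (hLD hrq.1))
    simp only [hmod, hdiv]

theorem card_filter_digits_mem {b : ℕ} (hb : 1 < b) {D : Finset ℕ} (hD0 : 0 ∈ D)
    (hDb : ∀ d ∈ D, d < b) (k : ℕ) :
    #{m ∈ range (b ^ k) | ∀ d ∈ b.digits m, d ∈ D} = #D ^ k := by
  induction k with
  | zero => simp [filter_singleton]
  | succ k ih =>
    rw [_root_.pow_succ' (#D), ← ih, ← card_filter_mod_mem_digits_mem hb hD0 hDb subset_rfl]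
    refine congrArg card (filter_congr fun m _ => ?_)
    rw [forall_digits_mem_iff hb hD0 m]
    tauto

end Nat

theorem card_filter_coprime_three_pow_digits_zero_or_one (n : ℕ) :
    #{m ∈ range (3 ^ (n + 1)) |
        m.Coprime (3 ^ (n + 1)) ∧ ∀ d ∈ Nat.digits 3 m, d = 0 ∨ d = 1} = 2 ^ n := by
  have hD0 : 0 ∈ ({0, 1} : Finset ℕ) := by simp
  have hDb : ∀ d ∈ ({0, 1} : Finset ℕ), d < 3 := by simp
  have hcount := Nat.card_filter_mod_mem_digits_mem (by norm_num) hD0 hDb (L := {1}) (by simp) n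
  rw [Nat.card_filter_digits_mem (by norm_num) hD0 hDb, card_pair zero_ne_one] at hcount
  simp only [mem_insert, mem_singleton, card_singleton, one_mul] at hcount
  rw [← hcount]
  refine congrArg card (filter_congr fun m _ => and_congr_left fun hdigits => ?_)
  rw [Nat.coprime_pow_right_iff n.succ_pos, Nat.coprime_comm,
    Nat.Prime.coprime_iff_not_dvd Nat.prime_three, Nat.dvd_iff_mod_eq_zero]
  have hlast := ((Nat.forall_digits_mem_iff (b := 3) (D := {0, 1}) (by norm_num) hD0 m).mp
    (by simpa using hdigits)).1
  simp only [mem_insert, mem_singleton] at hlast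
  omega

theorem ZMod.orderOf_two_three_pow (n : ℕ) : orderOf (2 : ZMod (3 ^ (n + 1))) = 2 * 3 ^ n := by
  have h2 : (2 : ZMod (3 ^ (n + 1))) = -1 * (1 + 3 * (-1 : ℤ)) := by push_cast; ring
  have hneg : orderOf (-1 : ZMod (3 ^ (n + 1))) = 2 := by
    have _ : Fact (1 < 3 ^ (n + 1)) := ⟨Nat.one_lt_pow (by omega) (by norm_num)⟩
    have hchar : ringChar (ZMod (3 ^ (n + 1))) ≠ 2 := by
      rw [ZMod.ringChar_zmod_n]
      have : 3 ≤ 3 ^ (n + 1) := Nat.le_self_pow (by omega) 3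
      omega
    rw [orderOf_neg_one, if_neg hchar]
  have hone := ZMod.orderOf_one_add_mul_prime Nat.prime_three (by norm_num) (-1) (by norm_num) n
  push_cast at hone
  have hcop : Nat.Coprime 2 (3 ^ n) :=
    (Nat.coprime_primes Nat.prime_two Nat.prime_three |>.mpr (by norm_num)).pow_right _
  rw [h2, (Commute.all _ _).orderOf_mul_eq_mul_orderOf_of_coprime] <;> push_cast
  · rw [hneg, hone]
  · rwa [hneg, hone]

theorem ZMod.card_units_filter_val {n : ℕ} [NeZero n] (P : ℕ → Prop) [DecidablePred P] :
    #{x : (ZMod n)ˣ | P (x : ZMod n).val} = #{m ∈ range n | m.Coprime n ∧ P m} := by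
  refine card_bij (fun x _ => (x : ZMod n).val) ?_ ?_ ?_
  · intro x hx
    simp only [mem_filter, mem_univ, true_and, mem_range] at hx ⊢
    exact ⟨ZMod.val_lt _, ZMod.val_coe_unit_coprime x, hx⟩
  · intro x _ y _ h
    exact Units.ext (ZMod.val_injective _ h)
  · intro m hm
    simp only [mem_filter, mem_range] at hm
    obtain ⟨hlt, hcop, hP⟩ := hm
    have hval : ((ZMod.unitOfCoprime m hcop : (ZMod n)ˣ) : ZMod n).val = m := by
      rw [ZMod.coe_unitOfCoprime, ZMod.val_natCast, Nat.mod_eq_of_lt hlt]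
    refine ⟨ZMod.unitOfCoprime m hcop, ?_, hval⟩
    simpa only [mem_filter, mem_univ, true_and, hval] using hP

theorem card_filter_Icc_orderOf_mul_pow {G : Type*} [Group G] [Fintype G] {g : G}
    (hg : orderOf g = Fintype.card G) (u : G) (Q : G → Prop) [DecidablePred Q] :
    #{n ∈ Icc 1 (orderOf g) | Q (u * g ^ n)} = #{x | Q x} := by
  classical
  have hperiodic : Function.Periodic (fun n => Q (u * g ^ n)) (orderOf g) := fun n => by
    simp only [pow_add, pow_orderOf_eq_one, mul_one]
  have hinj : Set.InjOn (fun n => u * g ^ n) (range (orderOf g)) := fun m hm n hn h =>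
    pow_injOn_Iio_orderOf (by simpa using hm) (by simpa using hn) (mul_left_cancel h)
  have himage : (range (orderOf g)).image (fun n => u * g ^ n) = univ :=
    eq_univ_of_card _ (by rw [card_image_of_injOn hinj, card_range, hg])
  rw [← Ico_add_one_right_eq_Icc, add_comm, Nat.filter_Ico_card_eq_of_periodic _ _ _ hperiodic,
    Nat.count_eq_card_filter_range, ← himage, filter_image,
    card_image_of_injOn (hinj.mono (coe_subset.mpr (filter_subset _ _)))]

theorem PadicInt.val_toZModPow {p : ℕ} [Fact p.Prime] (n : ℕ) (x : ℤ_[p]) :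
    (PadicInt.toZModPow n x).val = x.appr n := by
  have : NeZero (p ^ n) := ⟨pow_ne_zero _ (Fact.out : p.Prime).ne_zero⟩
  exact (ZMod.val_natCast _ _).trans (Nat.mod_eq_of_lt (PadicInt.appr_lt x n))

theorem PadicInt.isUnit_of_not_dvd {p : ℕ} [Fact p.Prime] {x : ℤ_[p]}
    (hx : ¬ (p : ℤ_[p]) ∣ x) : IsUnit x := by
  by_contra h
  exact hx (PadicInt.norm_lt_one_iff_dvd x |>.mp (PadicInt.not_isUnit_iff.mp h))

theorem count_first_k_digits_omit_two (lam : ℤ_[3]) (hlam : ¬ (3 : ℤ_[3]) ∣ lam)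
    (k : ℕ) (hk : 1 ≤ k) :
    {n : ℕ | 1 ≤ n ∧ n ≤ 2 * 3 ^ (k - 1) ∧
        ∀ d ∈ Nat.digits 3 ((lam * 2 ^ n).appr k), d = 0 ∨ d = 1}.ncard
      = 2 ^ (k - 1) := by
  obtain ⟨n, rfl⟩ : ∃ n, k = n + 1 := ⟨k - 1, by omega⟩
  rw [Nat.add_sub_cancel]
  have htwo := ZMod.orderOf_two_three_pow n
  have h2 : IsUnit (2 : ZMod (3 ^ (n + 1))) :=
    (orderOf_pos_iff.mp (by rw [htwo]; positivity)).isUnit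
  set g := h2.unit
  set u := ((PadicInt.isUnit_of_not_dvd hlam).map (PadicInt.toZModPow (n + 1))).unit
  have hg : orderOf g = 2 * 3 ^ n := by rw [← orderOf_units, IsUnit.unit_spec, htwo]
  have hcard : Fintype.card (ZMod (3 ^ (n + 1)))ˣ = 2 * 3 ^ n := by
    rw [ZMod.card_units_eq_totient, Nat.totient_prime_pow_succ Nat.prime_three]
    ring
  have happr : ∀ m, (lam * 2 ^ m).appr (n + 1)
      = ((u * g ^ m : (ZMod (3 ^ (n + 1)))ˣ) : ZMod (3 ^ (n + 1))).val := by
    intro m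
    rw [← PadicInt.val_toZModPow, map_mul, map_pow, map_ofNat]
    simp [u, g]
  have hset : {m : ℕ | 1 ≤ m ∧ m ≤ 2 * 3 ^ n ∧
      ∀ d ∈ Nat.digits 3 ((lam * 2 ^ m).appr (n + 1)), d = 0 ∨ d = 1}
      = ↑({m ∈ Icc 1 (orderOf g) |
          ∀ d ∈ Nat.digits 3 ((u * g ^ m : (ZMod (3 ^ (n + 1)))ˣ) : ZMod (3 ^ (n + 1))).val,
            d = 0 ∨ d = 1} : Finset ℕ) := by
    ext m
    simp [hg, happr, and_assoc]
  rw [hset, Set.ncard_coe_finset, card_filter_Icc_orderOf_mul_pow (hg.trans hcard.symm) u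
      (fun x => ∀ d ∈ Nat.digits 3 (x : ZMod (3 ^ (n + 1))).val, d = 0 ∨ d = 1),
    ZMod.card_units_filter_val (fun m => ∀ d ∈ Nat.digits 3 m, d = 0 ∨ d = 1),
    card_filter_coprime_three_pow_digits_zero_or_one]
end

section
/- For every nonzero 3-adic integer λ and every real X ≥ 2, the number of positive integers n ≤ X for which the 3-adic expansion of λ·2^n omits the digit 2 is at most 2·X^{log 2 / log 3}. -/
theorem Nat.mod_pow_eq_of_div_pow_mod_eq {b m s t : ℕ}
    (h : ∀ i < m, s / b ^ i % b = t / b ^ i % b) : s % b ^ m = t % b ^ m := by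
  induction m with
  | zero => simp [Nat.mod_one]
  | succ m ih =>
    rw [Nat.mod_pow_succ, Nat.mod_pow_succ, ih fun i hi => h i (by omega), h m (by omega)]

theorem even_of_three_dvd_two_pow_sub_one {d : ℕ} (h : 3 ∣ 2 ^ d - 1) : Even d := by
  by_contra hodd
  rw [Nat.not_even_iff_odd] at hodd
  have h0 : ((2 ^ d - 1 : ℕ) : ZMod 3) = 0 := (ZMod.natCast_eq_zero_iff _ 3).mpr h
  rw [Nat.cast_sub Nat.one_le_two_pow, Nat.cast_pow, show ((2 : ℕ) : ZMod 3) = -1 by decide,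
    hodd.neg_one_pow] at h0
  exact absurd h0 (by decide)

theorem two_mul_three_pow_dvd_of_dvd_two_pow_sub_one {m d : ℕ} (h : 3 ^ (m + 1) ∣ 2 ^ d - 1) :
    2 * 3 ^ m ∣ d := by
  obtain ⟨e, rfl⟩ := even_of_three_dvd_two_pow_sub_one ((dvd_pow_self 3 m.succ_ne_zero).trans h)
  rcases eq_or_ne e 0 with rfl | he
  · simp
  have h4 : 3 ^ (m + 1) ∣ 4 ^ e - 1 ^ e := by
    rwa [one_pow, show 4 ^ e = 2 ^ (e + e) by rw [← two_mul, pow_mul]; norm_num]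
  have hval : padicValNat 3 (4 ^ e - 1 ^ e) = 1 + padicValNat 3 e := by
    rw [padicValNat.pow_sub_pow (p := 3) (by decide) (by norm_num) (by norm_num) (by norm_num) he]
    norm_num
  rw [padicValNat_dvd_iff_le (Nat.sub_ne_zero_of_lt (Nat.pow_lt_pow_left (by norm_num) he))] at h4
  rw [← two_mul]
  exact mul_dvd_mul_left 2 ((padicValNat_dvd_iff_le he).mpr (by omega))

theorem two_pow_le_rpow_of_three_pow_le {j : ℕ} {X : ℝ} (h : (3 : ℝ) ^ j ≤ X) :
    (2 : ℝ) ^ j ≤ X ^ (Real.log 2 / Real.log 3) :=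
  calc (2 : ℝ) ^ j = ((3 : ℝ) ^ (Real.logb 3 2)) ^ j := by
        rw [Real.rpow_logb (by norm_num) (by norm_num) (by norm_num)]
    _ = ((3 : ℝ) ^ j) ^ (Real.log 2 / Real.log 3) := by
        rw [← Real.rpow_natCast, ← Real.rpow_natCast, ← Real.rpow_mul (by norm_num),
          ← Real.rpow_mul (by norm_num), mul_comm, Real.logb]
    _ ≤ X ^ (Real.log 2 / Real.log 3) :=
        Real.rpow_le_rpow (by positivity) h (div_nonneg (Real.log_nonneg one_le_two)
          (Real.log_nonneg (by norm_num)))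

namespace PadicInt

variable {p : ℕ} [Fact p.Prime]

theorem pow_dvd_natCast_iff {n a : ℕ} : (p : ℤ_[p]) ^ n ∣ (a : ℤ_[p]) ↔ p ^ n ∣ a := by
  rw [← Int.natCast_dvd_natCast, Nat.cast_pow, ← pow_p_dvd_int_iff, Int.cast_natCast]

theorem pow_dvd_iff_le_valuation {x : ℤ_[p]} (hx : x ≠ 0) (n : ℕ) :
    (p : ℤ_[p]) ^ n ∣ x ↔ n ≤ x.valuation := by
  rw [← Ideal.mem_span_singleton, mem_span_pow_iff_le_valuation x hx]

theorem pow_dvd_of_pow_valuation_add_dvd_mul {x z : ℤ_[p]} (hx : x ≠ 0) {m : ℕ}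
    (h : (p : ℤ_[p]) ^ (x.valuation + m) ∣ x * z) : (p : ℤ_[p]) ^ m ∣ z := by
  have hx' := unitCoeff_spec hx
  set v := x.valuation
  rw [hx', pow_add, mul_comm (unitCoeff hx : ℤ_[p]), mul_assoc,
    mul_dvd_mul_iff_left (pow_ne_zero _ (NeZero.ne _))] at h
  exact Units.dvd_mul_left.mp h

theorem appr_eq_appr_mod_pow (x : ℤ_[p]) {j k : ℕ} (h : j ≤ k) : x.appr j = x.appr k % p ^ j := by
  rw [← Nat.mod_eq_of_lt (x.appr_lt j)]
  exact ((Nat.modEq_iff_dvd' (x.appr_mono h)).mpr (x.dvd_appr_sub_appr j k h))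

theorem appr_eq_zero_iff (x : ℤ_[p]) (n : ℕ) : x.appr n = 0 ↔ (p : ℤ_[p]) ^ n ∣ x := by
  have hspec := Ideal.mem_span_singleton.mp (appr_spec n x)
  constructor
  · intro h
    simpa [h] using hspec
  · intro h
    have : p ^ n ∣ x.appr n := pow_dvd_natCast_iff.mp (by simpa using dvd_sub h hspec)
    exact Nat.eq_zero_of_dvd_of_lt this (x.appr_lt n)

theorem pow_dvd_sub_of_appr_eq {x y : ℤ_[p]} {n : ℕ} (h : x.appr n = y.appr n) :
    (p : ℤ_[p]) ^ n ∣ x - y := by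
  have hx := Ideal.mem_span_singleton.mp (appr_spec n x)
  have hy := Ideal.mem_span_singleton.mp (appr_spec n y)
  rw [h] at hx
  simpa using dvd_sub hx hy

end PadicInt

open PadicInt

theorem padicDigit_lt_three (y : ℤ_[3]) (j : ℕ) : padicDigit y j < 3 := Nat.mod_lt _ (by norm_num)

theorem padicDigit_eq_appr_div_pow_mod (y : ℤ_[3]) {j k : ℕ} (h : j < k) :
    padicDigit y j = y.appr k / 3 ^ j % 3 := by
  rw [padicDigit, y.appr_eq_appr_mod_pow h, pow_succ, Nat.mod_mul_right_div_self, Nat.mod_mod]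

theorem appr_eq_of_padicDigit_eq {y y' : ℤ_[3]} {k : ℕ}
    (h : ∀ j < k, padicDigit y j = padicDigit y' j) : y.appr k = y'.appr k := by
  rw [← Nat.mod_eq_of_lt (y.appr_lt k), ← Nat.mod_eq_of_lt (y'.appr_lt k)]
  refine Nat.mod_pow_eq_of_div_pow_mod_eq fun j hj => ?_
  rw [← padicDigit_eq_appr_div_pow_mod y hj, ← padicDigit_eq_appr_div_pow_mod y' hj, h j hj]

theorem pow_dvd_iff_forall_padicDigit_eq_zero (y : ℤ_[3]) (k : ℕ) :
    (3 : ℤ_[3]) ^ k ∣ y ↔ ∀ j < k, padicDigit y j = 0 := by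
  rw [← Nat.cast_ofNat (R := ℤ_[3]) (n := 3), ← appr_eq_zero_iff]
  refine ⟨fun h j hj => by rw [padicDigit_eq_appr_div_pow_mod y hj, h, Nat.zero_div], fun h => ?_⟩
  rw [← Nat.mod_eq_of_lt (y.appr_lt k), ← Nat.zero_mod (3 ^ k)]
  exact Nat.mod_pow_eq_of_div_pow_mod_eq fun j hj => by
    rw [← padicDigit_eq_appr_div_pow_mod y hj, h j hj, Nat.zero_div]

theorem padicDigit_eq_zero_of_lt_valuation {y : ℤ_[3]} {j : ℕ} (h : j < y.valuation) :
    padicDigit y j = 0 := by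
  have hy : y ≠ 0 := by rintro rfl; simp at h
  have hdvd : (3 : ℤ_[3]) ^ (j + 1) ∣ y := by
    exact_mod_cast (pow_dvd_iff_le_valuation hy (j + 1)).mpr h
  exact (pow_dvd_iff_forall_padicDigit_eq_zero y (j + 1)).mp hdvd j j.lt_succ_self

theorem padicDigit_valuation_ne_zero {y : ℤ_[3]} (hy : y ≠ 0) :
    padicDigit y y.valuation ≠ 0 := by
  intro h
  have hdvd : (3 : ℤ_[3]) ^ (y.valuation + 1) ∣ y := by
    refine (pow_dvd_iff_forall_padicDigit_eq_zero y _).mpr fun j hj => ?_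
    rcases (Nat.lt_succ_iff.mp hj).lt_or_eq with hj | rfl
    · exact padicDigit_eq_zero_of_lt_valuation hj
    · exact h
  have := (pow_dvd_iff_le_valuation hy _).mp (by exact_mod_cast hdvd)
  omega

theorem pow_dvd_sub_of_padicDigit_eq_one_iff {y y' : ℤ_[3]} {v m : ℕ} (hy : y ≠ 0) (hy' : y' ≠ 0)
    (hv : y.valuation = v) (hv' : y'.valuation = v) (h2 : ∀ j, padicDigit y j ≠ 2)
    (h2' : ∀ j, padicDigit y' j ≠ 2)
    (h : ∀ i < m, padicDigit y (v + 1 + i) = 1 ↔ padicDigit y' (v + 1 + i) = 1) :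
    (3 : ℤ_[3]) ^ (v + 1 + m) ∣ y - y' := by
  rw [← Nat.cast_ofNat (R := ℤ_[3]) (n := 3)]
  refine pow_dvd_sub_of_appr_eq (appr_eq_of_padicDigit_eq fun j hj => ?_)
  have hlt := padicDigit_lt_three y j
  have hlt' := padicDigit_lt_three y' j
  have hne := h2 j
  have hne' := h2' j
  rcases lt_trichotomy j v with hjv | rfl | hjv
  · rw [padicDigit_eq_zero_of_lt_valuation (hv ▸ hjv),
      padicDigit_eq_zero_of_lt_valuation (hv' ▸ hjv)]
  · have h0 := padicDigit_valuation_ne_zero hy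
    have h0' := padicDigit_valuation_ne_zero hy'
    rw [hv] at h0
    rw [hv'] at h0'
    omega
  · have hi := h (j - v - 1) (by omega)
    rw [show v + 1 + (j - v - 1) = j by omega] at hi
    omega

theorem valuation_mul_two_pow {x : ℤ_[3]} (hx : x ≠ 0) (n : ℕ) :
    (x * 2 ^ n).valuation = x.valuation := by
  have h2 : (2 : ℤ_[3]).valuation = 0 := by
    have := Padic.valuation_natCast (p := 3) 2
    rw [← coe_natCast, valuation_coe, padicValNat.eq_zero_of_not_dvd (by norm_num)] at this
    exact_mod_cast this
  rw [valuation_mul hx (pow_ne_zero _ two_ne_zero), valuation_pow, h2, mul_zero, add_zero]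

theorem two_mul_three_pow_le_sub_of_padicDigit_eq_one_iff {lam : ℤ_[3]} (hlam : lam ≠ 0)
    {m n n' : ℕ} (hlt : n' < n) (hn' : ∀ j, padicDigit (lam * 2 ^ n') j ≠ 2)
    (hn : ∀ j, padicDigit (lam * 2 ^ n) j ≠ 2)
    (h : ∀ i < m, padicDigit (lam * 2 ^ n') (lam.valuation + 1 + i) = 1 ↔
      padicDigit (lam * 2 ^ n) (lam.valuation + 1 + i) = 1) :
    2 * 3 ^ m ≤ n - n' := by
  have hy (n : ℕ) : lam * 2 ^ n ≠ 0 := mul_ne_zero hlam (pow_ne_zero _ two_ne_zero)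
  have hdvd := pow_dvd_sub_of_padicDigit_eq_one_iff (hy n') (hy n)
    (valuation_mul_two_pow hlam n') (valuation_mul_two_pow hlam n) hn' hn h
  have hfactor : lam * 2 ^ n' * (2 ^ (n - n') - 1) = -(lam * 2 ^ n' - lam * 2 ^ n) := by
    rw [mul_sub, mul_assoc, ← pow_add, Nat.add_sub_cancel' hlt.le]
    ring
  have hord : 3 ^ (m + 1) ∣ 2 ^ (n - n') - 1 := by
    rw [← pow_dvd_natCast_iff (p := 3), Nat.cast_sub Nat.one_le_two_pow]
    refine pow_dvd_of_pow_valuation_add_dvd_mul (hy n') ?_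
    push_cast
    rw [hfactor, dvd_neg, valuation_mul_two_pow hlam, ← add_assoc, add_right_comm]
    exact hdvd
  exact Nat.le_of_dvd (by omega) (two_mul_three_pow_dvd_of_dvd_two_pow_sub_one hord)

theorem ncard_omit_two_le_two_pow {lam : ℤ_[3]} (hlam : lam ≠ 0) {N m : ℕ} (hN : N < 2 * 3 ^ m) :
    {n : ℕ | n ≤ N ∧ ∀ j, padicDigit (lam * 2 ^ n) j ≠ 2}.ncard ≤ 2 ^ m := by
  let F : ℕ → Fin m → Bool := fun n i => padicDigit (lam * 2 ^ n) (lam.valuation + 1 + i) = 1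
  have hsep {n n' : ℕ} (hn : n ≤ N ∧ ∀ j, padicDigit (lam * 2 ^ n) j ≠ 2)
      (hn' : ∀ j, padicDigit (lam * 2 ^ n') j ≠ 2) (hlt : n' < n) (hF : F n' = F n) : False := by
    have := two_mul_three_pow_le_sub_of_padicDigit_eq_one_iff hlam hlt hn' hn.2
      fun i hi => by simpa [F] using congrFun hF ⟨i, hi⟩
    omega
  have hinj : Set.InjOn F {n : ℕ | n ≤ N ∧ ∀ j, padicDigit (lam * 2 ^ n) j ≠ 2} :=
    fun n hn n' hn' hF => by
      by_contra hne
      rcases Nat.lt_or_gt_of_ne hne with hlt | hlt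
      · exact hsep hn' hn.2 hlt hF
      · exact hsep hn hn'.2 hlt hF.symm
  simpa using Set.ncard_le_ncard_of_injOn F (fun _ _ => Set.mem_univ _) hinj Set.finite_univ

theorem padic_count_omit_two_le (lam : ℤ_[3]) (hlam : lam ≠ 0) (X : ℝ) (hX : 2 ≤ X) :
    ({n : ℕ | 1 ≤ n ∧ (n : ℝ) ≤ X ∧ ∀ j, padicDigit (lam * 2 ^ n) j ≠ 2}.ncard : ℝ)
      ≤ 2 * X ^ (Real.log 2 / Real.log 3) := by
  set N := ⌊X⌋₊
  set m := Nat.clog 3 N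
  have hN : 1 < N := Nat.le_floor (by norm_num; linarith)
  have hm : 0 < m := Nat.clog_pos (by norm_num) hN
  have hNm : N ≤ 3 ^ m := Nat.le_pow_clog (by norm_num) N
  have hcard : {n : ℕ | 1 ≤ n ∧ (n : ℝ) ≤ X ∧ ∀ j, padicDigit (lam * 2 ^ n) j ≠ 2}.ncard ≤ 2 ^ m :=
    calc _ ≤ {n : ℕ | n ≤ N ∧ ∀ j, padicDigit (lam * 2 ^ n) j ≠ 2}.ncard :=
          Set.ncard_le_ncard (fun n hn => ⟨Nat.le_floor hn.2.1, hn.2.2⟩)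
            ((Set.finite_Iic N).subset fun _ hn => hn.1)
      _ ≤ 2 ^ m := ncard_omit_two_le_two_pow hlam (by omega)
  have h3X : (3 : ℝ) ^ (m - 1) ≤ X :=
    calc (3 : ℝ) ^ (m - 1) ≤ N := by exact_mod_cast (Nat.pow_pred_clog_lt_self (by norm_num) hN).le
      _ ≤ X := Nat.floor_le (by linarith)
  calc (_ : ℝ) ≤ 2 ^ m := by exact_mod_cast hcard
    _ = 2 * 2 ^ (m - 1) := by rw [← pow_succ', Nat.sub_add_cancel hm]
    _ ≤ 2 * X ^ (Real.log 2 / Real.log 3) := by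
      gcongr
      exact two_pow_le_rpow_of_three_pow_le h3X
end

section
/- Let Σ = { y ∈ ℤ_3 : every 3-adic digit of y is 0 or 1 } and let M be a positive integer with M ≡ 2 (mod 3). Then the only 3-adic integer λ with both λ ∈ Σ and M·λ ∈ Σ is λ = 0. -/
/-!
Write `λ = 3 ^ v * u` with `u` a unit. Multiplication by `3 ^ v` shifts digits, so the digit of `λ`
at position `v` is the residue `r ≠ 0` of `u` mod 3, and that of `M * λ` is `2 * r mod 3`.
Both can be at most 1 only if `r = 0`.
-/

namespace PadicInt

variable {p : ℕ} [Fact p.Prime]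

theorem appr_eq_of_sub_mem {x : ℤ_[p]} {n m : ℕ} (hm : m < p ^ n)
    (h : x - m ∈ Ideal.span {(p : ℤ_[p]) ^ n}) : x.appr n = m := by
  have hx : toZModPow n (x - (m : ℤ_[p])) = 0 := by rwa [← RingHom.mem_ker, ker_toZModPow]
  rw [map_sub, map_natCast, sub_eq_zero] at hx
  -- `toZModPow n x` is by definition the cast of `x.appr n`
  have hcast : ((x.appr n : ℕ) : ZMod (p ^ n)) = m := hx
  rw [← ZMod.val_natCast_of_lt (appr_lt x n), hcast, ZMod.val_natCast_of_lt hm]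

theorem appr_pow_mul (x : ℤ_[p]) (k n : ℕ) :
    ((p : ℤ_[p]) ^ k * x).appr (k + n) = p ^ k * x.appr n := by
  apply appr_eq_of_sub_mem
  · rw [pow_add]
    exact Nat.mul_lt_mul_of_pos_left (appr_lt x n) (pow_pos (Fact.out : p.Prime).pos k)
  · have hx := Ideal.mem_span_singleton.mp (appr_spec n x)
    rw [Ideal.mem_span_singleton, pow_add]
    push_cast
    rw [← mul_sub]
    exact mul_dvd_mul_left _ hx

end PadicInt

open PadicInt

theorem padicDigit_three_pow_mul (x : ℤ_[3]) (k j : ℕ) :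
    padicDigit (3 ^ k * x) (k + j) = padicDigit x j := by
  have h := appr_pow_mul x k (j + 1)
  rw [Nat.cast_ofNat] at h
  rw [padicDigit, padicDigit, add_assoc, h, pow_add, Nat.mul_div_mul_left _ _ (by positivity)]

theorem padicDigit_zero (x : ℤ_[3]) : padicDigit x 0 = x.zmodRepr := by
  have hlt : x.appr 1 < 3 := by simpa using appr_lt x 1
  rw [padicDigit, pow_zero, Nat.div_one, Nat.mod_eq_of_lt hlt, eq_comm]
  apply zmodRepr_unique _ _ hlt
  simpa [maximalIdeal_eq_span_p] using appr_spec 1 x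

theorem padicDigit_three_pow_mul_self (x : ℤ_[3]) (k : ℕ) :
    padicDigit (3 ^ k * x) k = x.zmodRepr := by
  rw [← padicDigit_zero, ← padicDigit_three_pow_mul x k 0, add_zero]

theorem cantor_intersection_trivial_of_two_mod_three_general (M : ℕ)
    (hM3 : M % 3 = 2) (lam : ℤ_[3])
    (h1 : ∀ j, padicDigit lam j ≤ 1)
    (h2 : ∀ j, padicDigit ((M : ℤ_[3]) * lam) j ≤ 1) : lam = 0 := by
  by_contra hne
  set u := unitCoeff hne
  set v := lam.valuation
  have hlam : lam = 3 ^ v * (u : ℤ_[3]) := by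
    rw [mul_comm]
    exact_mod_cast unitCoeff_spec hne
  have hMlam : (M : ℤ_[3]) * lam = 3 ^ v * (M * (u : ℤ_[3])) := by rw [hlam]; ring
  have hdigit := h1 v
  have hMdigit := h2 v
  rw [hlam, padicDigit_three_pow_mul_self] at hdigit
  rw [hMlam, padicDigit_three_pow_mul_self, zmodRepr_mul, zmodRepr_natCast, hM3] at hMdigit
  have hu : (u : ℤ_[3]).zmodRepr ≠ 0 := zmodRepr_units_ne_zero u
  omega

theorem cantor_intersection_trivial_of_two_mod_three (M : ℕ) (hM : 0 < M)
    (hM3 : M % 3 = 2) (lam : ℤ_[3])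
    (h1 : ∀ j, padicDigit lam j ≤ 1)
    (h2 : ∀ j, padicDigit ((M : ℤ_[3]) * lam) j ≤ 1) : lam = 0 :=
  cantor_intersection_trivial_of_two_mod_three_general M hM3 lam h1 h2
end

section
/- Let Σ = { y ∈ ℤ_3 : every 3-adic digit of y is 0 or 1 } and let M be a positive integer with M ≡ 1 (mod 3). Then the set { λ ∈ ℤ_3 : λ ∈ Σ and M·λ ∈ Σ } is infinite. -/
namespace PadicInt

variable {p : ℕ} [Fact p.Prime]

theorem appr_eq_mod_of_sub_mem {x : ℤ_[p]} {k s : ℕ}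
    (h : x - s ∈ Ideal.span {(p : ℤ_[p]) ^ k}) : x.appr k = s % p ^ k := by
  have := (ZMod.natCast_eq_natCast_iff' _ _ _).1
    (zmod_congr_of_sub_mem_span k x _ _ (appr_spec k x) h)
  rwa [Nat.mod_eq_of_lt (appr_lt x k)] at this

theorem natCast_sub_mem_span_pow {a b k : ℕ} (h : a ≡ b [MOD p ^ k]) :
    (a : ℤ_[p]) - b ∈ Ideal.span {(p : ℤ_[p]) ^ k} := by
  rw [← ker_toZModPow, RingHom.mem_ker, map_sub, map_natCast, map_natCast, sub_eq_zero]
  exact (ZMod.natCast_eq_natCast_iff _ _ _).2 h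

theorem exists_sub_mem_span_pow (f : ℕ → ℤ_[p])
    (hf : ∀ {m n}, m ≤ n → f n - f m ∈ Ideal.span {(p : ℤ_[p]) ^ m}) :
    ∃ x : ℤ_[p], ∀ n, x - f n ∈ Ideal.span {(p : ℤ_[p]) ^ n} := by
  have hI : ∀ n, (IsLocalRing.maximalIdeal ℤ_[p] ^ n • ⊤ : Submodule ℤ_[p] ℤ_[p]) =
      Ideal.span {(p : ℤ_[p]) ^ n} := fun n => by
    rw [maximalIdeal_eq_span_p, Ideal.span_singleton_pow, smul_eq_mul, Ideal.mul_top]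
  obtain ⟨x, hx⟩ := IsPrecomplete.prec (I := IsLocalRing.maximalIdeal ℤ_[p]) inferInstance
    (f := f) fun hmn => by rw [hI, SModEq.comm, SModEq.sub_mem]; exact hf hmn
  exact ⟨x, fun n => by rw [← hI, ← SModEq.sub_mem]; exact (hx n).symm⟩

theorem pow_mul_injective {x : ℤ_[p]} (hx : x ≠ 0) :
    Function.Injective fun n : ℕ => (p : ℤ_[p]) ^ n * x :=
  (mul_left_injective₀ hx).comp (pow_injective_of_not_isUnit p_nonunit (NeZero.ne _))

end PadicInt

open PadicInt

theorem padicDigit_eq_of_sub_mem {y : ℤ_[3]} {j s : ℕ}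
    (h : y - s ∈ Ideal.span {(3 : ℤ_[3]) ^ (j + 1)}) : padicDigit y j = s / 3 ^ j % 3 := by
  rw [padicDigit, appr_eq_mod_of_sub_mem (p := 3) (by exact_mod_cast h), pow_succ,
    Nat.mod_mul_right_div_self, Nat.mod_mod]

theorem padicDigit_zero_left (j : ℕ) : padicDigit 0 j = 0 := by
  simpa using padicDigit_eq_of_sub_mem (y := 0) (s := 0) (j := j) (by simp)

theorem padicDigit_three_mul_zero (x : ℤ_[3]) : padicDigit (3 * x) 0 = 0 := by
  simpa using padicDigit_eq_of_sub_mem (y := 3 * x) (s := 0) (j := 0)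
    (by simpa using Ideal.mul_mem_right x _ (Ideal.mem_span_singleton_self 3))

theorem padicDigit_three_mul_succ (x : ℤ_[3]) (j : ℕ) :
    padicDigit (3 * x) (j + 1) = padicDigit x j := by
  have hx : x - x.appr (j + 1) ∈ Ideal.span {(3 : ℤ_[3]) ^ (j + 1)} := by
    exact_mod_cast appr_spec (j + 1) x
  rw [padicDigit_eq_of_sub_mem (s := 3 * x.appr (j + 1)), padicDigit, pow_succ',
    Nat.mul_div_mul_left _ _ three_pos]
  rw [Ideal.mem_span_singleton] at hx ⊢
  push_cast
  rw [← mul_sub, pow_succ']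
  exact mul_dvd_mul_left 3 hx

/-- The set `Σ` of the statement. -/
def threeAdicCantor : Set ℤ_[3] := {y | ∀ j, padicDigit y j ≤ 1}

theorem three_mul_mem_threeAdicCantor {y : ℤ_[3]} (hy : y ∈ threeAdicCantor) :
    3 * y ∈ threeAdicCantor
  | 0 => by rw [padicDigit_three_mul_zero]; exact zero_le_one
  | j + 1 => by rw [padicDigit_three_mul_succ]; exact hy j

theorem three_pow_mul_mem_threeAdicCantor {y : ℤ_[3]} (hy : y ∈ threeAdicCantor) (n : ℕ) :
    3 ^ n * y ∈ threeAdicCantor := by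
  induction n with
  | zero => simpa using hy
  | succ n ih => rw [pow_succ', mul_assoc]; exact three_mul_mem_threeAdicCantor ih

/-- Digit `j` of `λ`, given that its lower digits represent `s`. -/
def nextCantorDigit (M s j : ℕ) : ℕ := if M * (s + 3 ^ j) / 3 ^ j % 3 = 2 then 0 else 1

theorem nextCantorDigit_le_one (M s j : ℕ) : nextCantorDigit M s j ≤ 1 := by
  unfold nextCantorDigit; split_ifs <;> simp

theorem digit_mul_add_nextCantorDigit_le_one {M : ℕ} (hM : M % 3 = 1) (s j : ℕ) :
    M * (s + nextCantorDigit M s j * 3 ^ j) / 3 ^ j % 3 ≤ 1 := by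
  have hshift : M * (s + 3 ^ j) / 3 ^ j = M * s / 3 ^ j + M := by
    rw [Nat.mul_add, Nat.add_mul_div_right _ _ (by positivity)]
  unfold nextCantorDigit
  split_ifs with h
  · simp only [zero_mul, add_zero]
    omega
  · simp only [one_mul]
    omega

/-- `cantorApprox M j = ∑ i < j, d_i * 3 ^ i`, the truncations of `λ`. -/
def cantorApprox (M : ℕ) : ℕ → ℕ
  | 0 => 0
  | j + 1 => cantorApprox M j + nextCantorDigit M (cantorApprox M j) j * 3 ^ j

theorem cantorApprox_lt (M k : ℕ) : cantorApprox M k < 3 ^ k := by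
  induction k with
  | zero => simp [cantorApprox]
  | succ k ih =>
    have : nextCantorDigit M (cantorApprox M k) k * 3 ^ k ≤ 3 ^ k :=
      mul_le_of_le_one_left (Nat.zero_le _) (nextCantorDigit_le_one _ _ _)
    rw [cantorApprox, pow_succ]
    omega

theorem cantorApprox_digit_le_one (M j : ℕ) : cantorApprox M (j + 1) / 3 ^ j % 3 ≤ 1 := by
  rw [cantorApprox, Nat.add_mul_div_right _ _ (by positivity),
    Nat.div_eq_of_lt (cantorApprox_lt M j), zero_add]
  exact (Nat.mod_le _ _).trans (nextCantorDigit_le_one _ _ _)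

theorem cantorApprox_modEq (M : ℕ) {m n : ℕ} (hmn : m ≤ n) :
    cantorApprox M n ≡ cantorApprox M m [MOD 3 ^ m] := by
  induction n, hmn using Nat.le_induction with
  | base => rfl
  | succ n hmn ih =>
    have hdvd : 3 ^ m ∣ nextCantorDigit M (cantorApprox M n) n * 3 ^ n :=
      dvd_mul_of_dvd_right (pow_dvd_pow 3 hmn) _
    have hstep := (Nat.modEq_zero_iff_dvd.2 hdvd).add_left (cantorApprox M n)
    rw [add_zero] at hstep
    exact hstep.trans ih

theorem cantorApprox_one {M : ℕ} (hM : M % 3 = 1) : cantorApprox M 1 = 1 := by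
  simp [cantorApprox, nextCantorDigit, hM]

theorem exists_ne_zero_mem_threeAdicCantor_and_mul_mem {M : ℕ} (hM : M % 3 = 1) :
    ∃ lam : ℤ_[3], lam ≠ 0 ∧ lam ∈ threeAdicCantor ∧ (M : ℤ_[3]) * lam ∈ threeAdicCantor := by
  obtain ⟨lam, hlam⟩ := exists_sub_mem_span_pow (p := 3) (fun n => (cantorApprox M n : ℤ_[3]))
    fun hmn => natCast_sub_mem_span_pow (cantorApprox_modEq M hmn)
  push_cast at hlam
  have hMlam : ∀ n, (M : ℤ_[3]) * lam - (M * cantorApprox M n : ℕ) ∈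
      Ideal.span {(3 : ℤ_[3]) ^ n} := fun n => by
    push_cast
    rw [← mul_sub]
    exact Ideal.mul_mem_left _ _ (hlam n)
  refine ⟨lam, ?_, fun j => ?_, fun j => ?_⟩
  · rintro rfl
    have h := padicDigit_eq_of_sub_mem (hlam 1)
    rw [padicDigit_zero_left, cantorApprox_one hM] at h
    exact zero_ne_one h
  · rw [padicDigit_eq_of_sub_mem (hlam (j + 1))]
    exact cantorApprox_digit_le_one M j
  · rw [padicDigit_eq_of_sub_mem (hMlam (j + 1))]
    exact digit_mul_add_nextCantorDigit_le_one hM _ j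

theorem cantor_intersection_infinite_of_one_mod_three_general (M : ℕ)
    (hM3 : M % 3 = 1) :
    {lam : ℤ_[3] | (∀ j, padicDigit lam j ≤ 1) ∧
      ∀ j, padicDigit ((M : ℤ_[3]) * lam) j ≤ 1}.Infinite := by
  obtain ⟨lam, hne, hlam, hMlam⟩ := exists_ne_zero_mem_threeAdicCantor_and_mul_mem hM3
  change {lam : ℤ_[3] | lam ∈ threeAdicCantor ∧ (M : ℤ_[3]) * lam ∈ threeAdicCantor}.Infinite
  refine Set.infinite_of_injective_forall_mem (pow_mul_injective (p := 3) hne) fun n => ⟨?_, ?_⟩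
  · exact_mod_cast three_pow_mul_mem_threeAdicCantor hlam n
  · rw [mul_left_comm]
    exact_mod_cast three_pow_mul_mem_threeAdicCantor hMlam n

theorem cantor_intersection_infinite_of_one_mod_three (M : ℕ) (hM : 0 < M)
    (hM3 : M % 3 = 1) :
    {lam : ℤ_[3] | (∀ j, padicDigit lam j ≤ 1) ∧
      ∀ j, padicDigit ((M : ℤ_[3]) * lam) j ≤ 1}.Infinite :=
  cantor_intersection_infinite_of_one_mod_three_general M hM3
end

section
/- Let Σ_A = { λ ∈ ℤ_3 : for every n ≥ 0, the pair of 3-adic digits (d_{2n+1}, d_{2n}) of λ is (0,0) or (0,1) }. Then every λ ∈ Σ_A has all 3-adic digits in {0,1}, and moreover all 3-adic digits of 4·λ lie in {0,1}. -/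
theorem Nat.div_nine_div_three_pow (A m : ℕ) : A / 9 / 3 ^ m = A / 3 ^ (m + 2) := by
  rw [Nat.div_div_eq_div_mul, pow_add, mul_comm]
  norm_num

theorem Nat.four_mul_div_three_pow_mod_three_le_one {A : ℕ}
    (h : ∀ k, A / 3 ^ (2 * k + 1) % 3 = 0 ∧ A / 3 ^ (2 * k) % 3 ≤ 1) (j : ℕ) :
    4 * A / 3 ^ j % 3 ≤ 1 := by
  induction j using Nat.strong_induction_on generalizing A with
  | _ j ih =>
  have hA : A % 9 = 0 ∨ A % 9 = 1 := by
    have h0 := h 0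
    simp only [mul_zero, zero_add, pow_one, pow_zero, Nat.div_one] at h0
    rw [show 9 = 3 * 3 from rfl, Nat.mod_mul]
    omega
  match j with
  | 0 => simp only [pow_zero, Nat.div_one]; omega
  | 1 => simp only [pow_one]; rcases hA with hA | hA <;> omega
  | j + 2 =>
    -- `4 * A = 9 * (4 * (A / 9)) + 4 * (A % 9)` with `4 * (A % 9) < 9`: no carry.
    rw [← Nat.div_nine_div_three_pow, show 4 * A / 9 = 4 * (A / 9) by omega]
    exact ih j (by omega) fun k => by
      simpa only [Nat.div_nine_div_three_pow, show 2 * k + 1 + 2 = 2 * (k + 1) + 1 by ring,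
        show 2 * k + 2 = 2 * (k + 1) by ring] using h (k + 1)

namespace PadicInt

variable {p : ℕ} [Fact p.Prime]

theorem appr_mod_pow_of_le (x : ℤ_[p]) {m n : ℕ} (h : m ≤ n) : x.appr n % p ^ m = x.appr m := by
  have := (Nat.modEq_iff_dvd' (x.appr_mono h)).mpr (x.dvd_appr_sub_appr m n h)
  rw [← this, Nat.mod_eq_of_lt (x.appr_lt m)]

theorem appr_div_pow_of_le (x : ℤ_[p]) {n i : ℕ} (h : n ≤ i) : x.appr n / p ^ i = 0 :=
  Nat.div_eq_of_lt <| (x.appr_lt n).trans_le <| Nat.pow_le_pow_right (Fact.out : p.Prime).pos h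

theorem appr_natCast_mul (k : ℕ) (x : ℤ_[p]) (n : ℕ) :
    ((k : ℤ_[p]) * x).appr n = k * x.appr n % p ^ n := by
  have val_toZModPow : ∀ y : ℤ_[p], (toZModPow n y).val = y.appr n := fun y => by
    rw [show toZModPow n y = (y.appr n : ZMod (p ^ n)) from rfl, ZMod.val_natCast,
      Nat.mod_eq_of_lt (y.appr_lt n)]
  rw [← val_toZModPow, map_mul, map_natCast,
    show toZModPow n x = (x.appr n : ZMod (p ^ n)) from rfl, ← Nat.cast_mul, ZMod.val_natCast]

end PadicInt

open PadicInt

theorem appr_div_pow_mod_three_eq_ite (x : ℤ_[3]) (n i : ℕ) :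
    x.appr n / 3 ^ i % 3 = if i < n then padicDigit x i else 0 := by
  split_ifs with h
  · rw [padicDigit, ← x.appr_mod_pow_of_le h, pow_succ, Nat.mod_mul_right_div_self, Nat.mod_mod]
  · rw [x.appr_div_pow_of_le (not_lt.mp h), Nat.zero_mod]

theorem padicDigit_natCast_mul (k : ℕ) (x : ℤ_[3]) (j : ℕ) :
    padicDigit (k * x) j = k * x.appr (j + 1) / 3 ^ j % 3 := by
  rw [padicDigit, appr_natCast_mul, pow_succ, Nat.mod_mul_right_div_self, Nat.mod_mod]

theorem sigmaA_subset_cantor_one_four (lam : ℤ_[3])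
    (h : ∀ n : ℕ, padicDigit lam (2 * n + 1) = 0 ∧
        (padicDigit lam (2 * n) = 0 ∨ padicDigit lam (2 * n) = 1)) :
    (∀ j, padicDigit lam j ≤ 1) ∧ ∀ j, padicDigit (4 * lam) j ≤ 1 := by
  refine ⟨fun j => ?_, fun j => ?_⟩
  · obtain ⟨k, rfl | rfl⟩ := Nat.even_or_odd' j <;> have := h k <;> omega
  · rw [show (4 : ℤ_[3]) = (4 : ℕ) by norm_num, padicDigit_natCast_mul]
    refine Nat.four_mul_div_three_pow_mod_three_le_one (fun k => ?_) j
    have := h k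
    simp only [appr_div_pow_mod_three_eq_ite]
    split_ifs <;> omega
end

section
/- Let Σ_B = { λ ∈ ℤ_3 : for every n ≥ 0, the block of six 3-adic digits (d_{6n+5},...,d_{6n}) of λ is (0,0,0,0,0,0) or (0,0,0,0,0,1) }. Then for each λ ∈ Σ_B, all 3-adic digits of λ, of 4·λ, and of 256·λ lie in {0,1}. -/
/-- A natural number below `3^k` with all ternary digits zero is zero. -/
lemma allzero : ∀ (k : ℕ) (y : ℕ), y < 3 ^ k → (∀ r, y / 3 ^ r % 3 = 0) → y = 0 := by
  intro k
  induction k with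
  | zero => intro y hy _; simpa using Nat.lt_one_iff.mp (by simpa using hy)
  | succ k ih =>
    intro y hy hd
    have h0 : y % 3 = 0 := by simpa using hd 0
    have hlt : y / 3 < 3 ^ k := by
      apply Nat.div_lt_of_lt_mul
      rw [← pow_succ']
      exact hy
    have h3 : y / 3 = 0 := by
      apply ih _ hlt
      intro r
      rw [Nat.div_div_eq_div_mul, ← pow_succ']
      exact hd (r + 1)
    omega

lemma appr_eq (y : ℤ_[3]) (k b : ℕ) (hb : (3 : ℤ_[3]) ^ k ∣ y - (b : ℤ_[3])) :
    y.appr k = b % 3 ^ k := by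
  have hspec := y.appr_spec k
  rw [Ideal.mem_span_singleton] at hspec
  have h2 : (3 : ℤ_[3]) ^ k ∣ (y.appr k : ℤ_[3]) - (b : ℤ_[3]) := by
    have : (y.appr k : ℤ_[3]) - (b : ℤ_[3]) = -(y - y.appr k) + (y - b) := by ring
    rw [this]
    exact dvd_add (dvd_neg.mpr hspec) hb
  have h1 : ((3 : ℕ) : ℤ_[3]) ^ k ∣ (((y.appr k : ℤ) - (b : ℤ) : ℤ) : ℤ_[3]) := by
    push_cast
    exact_mod_cast h2
  rw [PadicInt.pow_p_dvd_int_iff] at h1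
  have hmod : (y.appr k : ℤ) % 3 ^ k = (b : ℤ) % 3 ^ k := by
    simp only [Nat.cast_ofNat] at h1
    have hme : (b : ℤ) ≡ (y.appr k : ℤ) [ZMOD ((3:ℤ) ^ k)] := Int.modEq_iff_dvd.mpr h1
    exact hme.symm
  have h3 : y.appr k % 3 ^ k = b % 3 ^ k := by exact_mod_cast hmod
  rw [← h3, Nat.mod_eq_of_lt (y.appr_lt k)]

lemma digit_eq (y : ℤ_[3]) (a m j : ℕ) (hj : j < m)
    (hdvd : (3 : ℤ_[3]) ^ m ∣ y - (a : ℤ_[3])) : padicDigit y j = a / 3 ^ j % 3 := by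
  have h1 : (3 : ℤ_[3]) ^ (j + 1) ∣ y - (a : ℤ_[3]) :=
    dvd_trans (pow_dvd_pow 3 (by omega)) hdvd
  have h2 := appr_eq y (j + 1) a h1
  unfold padicDigit
  rw [h2, pow_succ, Nat.mod_mul_right_div_self]
  omega

lemma digit_block (w n r : ℕ) (hr : r < 6) :
    w / 3 ^ (6 * n + r) % 3 = (w / 729 ^ n % 729) / 3 ^ r % 3 := by
  have h729 : (729 : ℕ) ^ n = 3 ^ (6 * n) := by
    rw [show (729 : ℕ) = 3 ^ 6 by norm_num, ← pow_mul]
  have hsplit : (729 : ℕ) = 3 ^ r * 3 ^ (6 - r) := by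
    have h6 : r + (6 - r) = 6 := by omega
    rw [← pow_add, h6]
    norm_num
  rw [h729]
  conv_rhs => rw [hsplit, Nat.mod_mul_right_div_self]
  rw [Nat.div_div_eq_div_mul, ← pow_add,
    Nat.mod_mod_of_dvd _ (dvd_pow_self 3 (show 6 - r ≠ 0 by omega))]

lemma block_mul (c : ℕ) (hc : c < 729) :
    ∀ (i a : ℕ), (∀ k, a / 729 ^ k % 729 ≤ 1) →
      c * a / 729 ^ i % 729 = c * (a / 729 ^ i % 729) := by
  intro i
  induction i with
  | zero =>
    intro a ha
    simp only [pow_zero, Nat.div_one]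
    have h0 : a % 729 ≤ 1 := by simpa using ha 0
    have key : c * a = c * (a % 729) + 729 * (c * (a / 729)) := by
      conv_lhs => rw [← Nat.mod_add_div a 729]
      ring
    have hlt : c * (a % 729) < 729 :=
      lt_of_le_of_lt (by calc c * (a % 729) ≤ c * 1 := Nat.mul_le_mul_left c h0
                          _ = c := Nat.mul_one c) hc
    rw [key, Nat.add_mul_mod_self_left, Nat.mod_eq_of_lt hlt]
  | succ i ih =>
    intro a ha
    have h0 : a % 729 ≤ 1 := by simpa using ha 0
    have hlt : c * (a % 729) < 729 :=
      lt_of_le_of_lt (by calc c * (a % 729) ≤ c * 1 := Nat.mul_le_mul_left c h0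
                          _ = c := Nat.mul_one c) hc
    have key : c * a / 729 = c * (a / 729) := by
      conv_lhs => rw [← Nat.mod_add_div a 729]
      rw [Nat.mul_add, Nat.mul_left_comm, Nat.add_mul_div_left _ _ (by norm_num : 0 < 729),
        Nat.div_eq_of_lt hlt, Nat.zero_add]
    have hdig : ∀ k, (a / 729) / 729 ^ k % 729 ≤ 1 := by
      intro k
      rw [Nat.div_div_eq_div_mul, ← pow_succ']
      exact ha (k + 1)
    calc c * a / 729 ^ (i + 1) % 729
        = (c * a / 729) / 729 ^ i % 729 := by
          rw [Nat.div_div_eq_div_mul, ← pow_succ']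
      _ = c * ((a / 729) / 729 ^ i % 729) := by rw [key]; exact ih (a / 729) hdig
      _ = c * (a / 729 ^ (i + 1) % 729) := by
          rw [Nat.div_div_eq_div_mul, ← pow_succ']

lemma main_digit (lam : ℤ_[3])
    (h : ∀ n : ℕ, padicDigit lam (6 * n + 5) = 0 ∧ padicDigit lam (6 * n + 4) = 0 ∧
        padicDigit lam (6 * n + 3) = 0 ∧ padicDigit lam (6 * n + 2) = 0 ∧
        padicDigit lam (6 * n + 1) = 0 ∧
        (padicDigit lam (6 * n) = 0 ∨ padicDigit lam (6 * n) = 1))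
    (c : ℕ) (hc : c < 729) (hcd : ∀ r, r < 6 → c / 3 ^ r % 3 ≤ 1) (j : ℕ) :
    padicDigit ((c : ℤ_[3]) * lam) j ≤ 1 := by
  set n := j / 6 with hn
  set m := 6 * (n + 1) with hm
  set a := lam.appr m with ha
  have hjm : j < m := by omega
  -- digits of a agree with digits of lam below m
  have hdig : ∀ j', j' < m → a / 3 ^ j' % 3 = padicDigit lam j' := by
    intro j' hj'
    obtain ⟨t, ht⟩ := PadicInt.dvd_appr_sub_appr lam (j' + 1) m (by omega)
    have hle := lam.appr_mono (show j' + 1 ≤ m by omega)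
    have heq : a = lam.appr (j' + 1) + 3 ^ (j' + 1) * t := by
      rw [ha, ← ht, Nat.add_sub_cancel' hle]
    have h1 : a % 3 ^ (j' + 1) = lam.appr (j' + 1) := by
      rw [heq, Nat.add_mul_mod_self_left]
      exact Nat.mod_eq_of_lt (lam.appr_lt _)
    have h2 : a / 3 ^ j' % 3 = a % 3 ^ (j' + 1) / 3 ^ j' := by
      rw [pow_succ, Nat.mod_mul_right_div_self]
    unfold padicDigit
    rw [h2, h1]
    have hq : lam.appr (j' + 1) / 3 ^ j' < 3 := by
      apply Nat.div_lt_of_lt_mul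
      rw [← pow_succ]
      exact lam.appr_lt _
    exact (Nat.mod_eq_of_lt hq).symm
  -- base-729 digits of a are 0 or 1
  have hblock : ∀ k, a / 729 ^ k % 729 ≤ 1 := by
    intro k
    by_cases hk : k ≤ n
    · set x := a / 729 ^ k % 729 with hx
      have hxlt : x < 729 := Nat.mod_lt _ (by norm_num)
      have hxd : ∀ r, r < 6 → x / 3 ^ r % 3 = padicDigit lam (6 * k + r) := by
        intro r hr
        rw [hx, ← digit_block a k r hr]
        exact hdig _ (by omega)
      obtain ⟨h5, h4, h3, h2, h1, h0⟩ := h k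
      have hx3 : x / 3 = 0 := by
        apply allzero 5 (x / 3)
        · omega
        · intro r
          rcases Nat.lt_or_ge r 5 with hr | hr
          · have hred : x / 3 / 3 ^ r = x / 3 ^ (r + 1) := by
              rw [Nat.div_div_eq_div_mul, ← pow_succ']
            rw [hred, hxd (r + 1) (by omega)]
            interval_cases r
            · exact h1
            · exact h2
            · exact h3
            · exact h4
            · exact h5
          · have : x / 3 / 3 ^ r = 0 := by
              apply Nat.div_eq_of_lt
              calc x / 3 < 243 := by omega
                _ ≤ 3 ^ r := by
                    calc (243 : ℕ) = 3 ^ 5 := by norm_num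
                      _ ≤ 3 ^ r := Nat.pow_le_pow_right (by norm_num) hr
            simp [this]
      have hx0 : x % 3 ≤ 1 := by
        have e0 := hxd 0 (by norm_num)
        simp only [pow_zero, Nat.div_one, Nat.add_zero] at e0
        rw [e0]
        rcases h0 with h' | h' <;> omega
      omega
    · have h729 : (729 : ℕ) ^ n.succ ≤ 729 ^ k := Nat.pow_le_pow_right (by norm_num) (by omega)
      have haLt : a < 729 ^ k := by
        apply lt_of_lt_of_le _ h729
        have := lam.appr_lt m
        have hpow : (3 : ℕ) ^ m = 729 ^ (n + 1) := by
          rw [show (729 : ℕ) = 3 ^ 6 by norm_num, ← pow_mul, hm]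
        rw [hpow] at this
        exact this
      simp [Nat.div_eq_of_lt haLt]
  -- the dvd fact
  have hdvd : (3 : ℤ_[3]) ^ m ∣ (c : ℤ_[3]) * lam - ((c * a : ℕ) : ℤ_[3]) := by
    have hspec := lam.appr_spec m
    rw [Ideal.mem_span_singleton] at hspec
    have : (c : ℤ_[3]) * lam - ((c * a : ℕ) : ℤ_[3]) = (c : ℤ_[3]) * (lam - (a : ℕ)) := by
      push_cast
      ring
    rw [this]
    exact Dvd.dvd.mul_left hspec _
  have hjdig : padicDigit ((c : ℤ_[3]) * lam) j = (c * a) / 3 ^ j % 3 :=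
    digit_eq _ _ m j hjm hdvd
  rw [hjdig]
  have hj6 : 6 * n + j % 6 = j := by omega
  rw [← hj6, digit_block (c * a) n (j % 6) (by omega),
    block_mul c hc n a hblock]
  have hb := hblock n
  rcases Nat.le_one_iff_eq_zero_or_eq_one.mp hb with hb' | hb' <;> rw [hb']
  · simp
  · rw [Nat.mul_one]
    exact hcd (j % 6) (by omega)

theorem sigmaB_subset_cantor_one_four_256 (lam : ℤ_[3])
    (h : ∀ n : ℕ, padicDigit lam (6 * n + 5) = 0 ∧ padicDigit lam (6 * n + 4) = 0 ∧
        padicDigit lam (6 * n + 3) = 0 ∧ padicDigit lam (6 * n + 2) = 0 ∧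
        padicDigit lam (6 * n + 1) = 0 ∧
        (padicDigit lam (6 * n) = 0 ∨ padicDigit lam (6 * n) = 1)) :
    (∀ j, padicDigit lam j ≤ 1) ∧ (∀ j, padicDigit (4 * lam) j ≤ 1) ∧
      ∀ j, padicDigit (256 * lam) j ≤ 1 := by
  refine ⟨fun j => ?_, fun j => ?_, fun j => ?_⟩
  · have := main_digit lam h 1 (by norm_num) (by decide) j
    simpa using this
  · have := main_digit lam h 4 (by norm_num) (by decide) j
    have h4 : ((4 : ℕ) : ℤ_[3]) = (4 : ℤ_[3]) := by norm_num
    rwa [h4] at this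
  · have := main_digit lam h 256 (by norm_num) (by decide) j
    have h256 : ((256 : ℕ) : ℤ_[3]) = (256 : ℤ_[3]) := by norm_num
    rwa [h256] at this
end

section
/- For a prime p and natural numbers m ≤ n, the binomial coefficient C(n, m) is not divisible by p if and only if every base-p digit of m is less than or equal to the corresponding base-p digit of n (Lucas' theorem criterion); in particular, 3 does not divide C(2^{k+1}, 2^k) if and only if the ternary expansion of 2^k omits the digit 2. -/
/-!
By Lucas' theorem `C(n, m)` is congruent mod `p` to the product of the digitwise binomial
coefficients `C(nᵢ, mᵢ)`, and for digits `b, a < p` the factor `C(a, b)` is divisible by `p`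
exactly when it vanishes, i.e. when `a < b`.

For `C(2n, n)` and `p = 3`: as long as the ternary digits of `n` are `0` or `1`, doubling `n`
produces no carry, so each digit of `n` is at most the corresponding digit of `2n`; at the first
digit `2` of `n`, the digit of `2n` is `1`.
-/

theorem Nat.Prime.dvd_choose_iff_lt {p a b : ℕ} (hp : p.Prime) (ha : a < p) :
    p ∣ a.choose b ↔ a < b := by
  refine ⟨fun h => ?_, fun h => Nat.choose_eq_zero_of_lt h ▸ dvd_zero p⟩
  by_contra! hba
  have hfact : p ∣ a.factorial := by
    rw [← Nat.choose_mul_factorial_mul_factorial hba, mul_assoc]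
    exact h.mul_right _
  exact (hp.dvd_factorial.mp hfact).not_gt ha

theorem Nat.Prime.not_dvd_choose_iff_forall_le {p : ℕ} (hp : p.Prime) (n m : ℕ) :
    ¬ p ∣ n.choose m ↔ ∀ i, m / p ^ i % p ≤ n / p ^ i % p := by
  have := Fact.mk hp
  have hn : n < p ^ (n + m) := (n.le_add_right m).trans_lt (Nat.lt_pow_self hp.one_lt)
  have hm : m < p ^ (n + m) := (m.le_add_left n).trans_lt (Nat.lt_pow_self hp.one_lt)
  rw [Nat.dvd_iff_mod_eq_zero, Choose.choose_modEq_prod_range_choose_nat hn hm,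
    ← Nat.dvd_iff_mod_eq_zero, Prime.dvd_finsetProd_iff hp.prime]
  simp only [Finset.mem_range, hp.dvd_choose_iff_lt (Nat.mod_lt _ hp.pos), not_exists, not_and,
    not_lt]
  refine ⟨fun h i => ?_, fun h i _ => h i⟩
  rcases lt_or_ge i (n + m) with hi | hi
  · exact h i hi
  · rw [Nat.div_eq_of_lt (hm.trans_le (Nat.pow_le_pow_right hp.pos hi)), Nat.zero_mod]
    exact Nat.zero_le _

theorem Nat.forall_iff_zero_and_forall_succ {P : ℕ → Prop} :
    (∀ n, P n) ↔ P 0 ∧ ∀ n, P (n + 1) :=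
  ⟨fun h => ⟨h 0, fun n => h (n + 1)⟩, fun ⟨h0, hs⟩ n => n.casesOn h0 hs⟩

theorem List.forall_mem_iff_forall_getD {α : Type*} {l : List α} {P : α → Prop} {d : α}
    (hd : P d) : (∀ x ∈ l, P x) ↔ ∀ i, P (l.getD i d) := by
  refine ⟨fun h i => ?_, fun h x hx => ?_⟩
  · rcases lt_or_ge i l.length with hi | hi
    · exact List.getD_eq_getElem _ _ hi ▸ h _ (l.getElem_mem hi)
    · exact List.getD_eq_default _ _ hi ▸ hd
  · obtain ⟨i, hi, rfl⟩ := List.getElem_of_mem hx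
    exact List.getD_eq_getElem _ _ hi ▸ h i

theorem forall_div_pow_mod_three_le_two_mul_iff (n : ℕ) :
    (∀ i, n / 3 ^ i % 3 ≤ 2 * n / 3 ^ i % 3) ↔ ∀ i, n / 3 ^ i % 3 ≠ 2 := by
  induction n using Nat.strong_induction_on with
  | _ n ih =>
  rcases n.eq_zero_or_pos with rfl | hn
  · simp
  have hdiv (a i : ℕ) : a / 3 ^ (i + 1) = a / 3 / 3 ^ i := by
    rw [Nat.div_div_eq_div_mul, pow_succ']
  rw [Nat.forall_iff_zero_and_forall_succ,
    Nat.forall_iff_zero_and_forall_succ (P := fun i => _ ≠ 2)]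
  simp only [pow_zero, Nat.div_one, hdiv]
  rcases (by omega : n % 3 ≤ 1 ∨ n % 3 = 2) with hr | hr
  · have hno_carry : 2 * n / 3 = 2 * (n / 3) := by omega
    rw [hno_carry, ih _ (by omega)]
    exact and_congr_left' (by omega)
  · omega

theorem three_not_dvd_choose_two_mul_iff (n : ℕ) :
    ¬ 3 ∣ (2 * n).choose n ↔ ∀ d ∈ Nat.digits 3 n, d ≠ 2 := by
  rw [Nat.prime_three.not_dvd_choose_iff_forall_le, forall_div_pow_mod_three_le_two_mul_iff,
    List.forall_mem_iff_forall_getD (P := (· ≠ 2)) (d := 0) (by decide)]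
  simp only [Nat.getD_digits _ _ (by norm_num : 2 ≤ 3)]

theorem lucas_criterion_and_central_binomial :
    (∀ (p n m : ℕ), p.Prime → m ≤ n →
        (¬ p ∣ Nat.choose n m ↔
          ∀ i, (Nat.digits p m).getD i 0 ≤ (Nat.digits p n).getD i 0)) ∧
      ∀ k : ℕ, (¬ 3 ∣ Nat.choose (2 ^ (k + 1)) (2 ^ k) ↔
        ∀ d ∈ Nat.digits 3 (2 ^ k), d ≠ 2) := by
  refine ⟨fun p n m hp _ => ?_, fun k => ?_⟩
  · simp only [Nat.getD_digits _ _ hp.two_le]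
    exact hp.not_dvd_choose_iff_forall_le n m
  · rw [pow_succ', three_not_dvd_choose_two_mul_iff]
end

section
/- Let Σ ⊂ ℤ_3 be the set of 3-adic integers all of whose digits lie in {0,1}, and suppose M > 1 is a positive integer coprime to 3 with M ≡ 1 (mod 3) and M not a power of 3. Write m ≥ 1 for the position of the second-lowest nonzero ternary digit of M. Then for every r ≥ 2m, the number of residue classes λ mod 3^r that contain an element of Σ ∩ (1/M)Σ is at most 3^{r/2 + 2m}. -/
open Finset

namespace TernaryZeroOne

def LowDigitsLeOne (n x : ℕ) : Prop := ∀ i < n, x / 3 ^ i % 3 ≤ 1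

instance (n : ℕ) : DecidablePred (LowDigitsLeOne n) := fun _ => Nat.decidableBallLT _ _

theorem div_pow_mod_eq_of_modEq {b x y n i : ℕ} (h : x ≡ y [MOD b ^ n]) (hi : i < n) :
    x / b ^ i % b = y / b ^ i % b := by
  have h' : x ≡ y [MOD b ^ i * b] := h.of_dvd (by rw [← pow_succ]; exact pow_dvd_pow b hi)
  rw [← Nat.mod_mul_right_div_self, ← Nat.mod_mul_right_div_self y, h']

theorem lowDigitsLeOne_congr {n x y : ℕ} (h : x ≡ y [MOD 3 ^ n]) :
    LowDigitsLeOne n x ↔ LowDigitsLeOne n y :=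
  forall₂_congr fun _ hi => by rw [div_pow_mod_eq_of_modEq h hi]

theorem lowDigitsLeOne_one {x : ℕ} : LowDigitsLeOne 1 x ↔ x % 3 ≤ 1 := by
  simp [LowDigitsLeOne]

theorem lowDigitsLeOne_add_iff {k n x : ℕ} :
    LowDigitsLeOne (k + n) x ↔ LowDigitsLeOne k x ∧ LowDigitsLeOne n (x / 3 ^ k) := by
  simp only [LowDigitsLeOne, Nat.div_div_eq_div_mul, ← pow_add]
  refine ⟨fun h => ⟨fun i hi => h i (by omega), fun i hi => h (k + i) (by omega)⟩, ?_⟩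
  rintro ⟨hlow, hhigh⟩ i hi
  rcases lt_or_ge i k with hik | hki
  · exact hlow i hik
  · obtain ⟨j, rfl⟩ := Nat.exists_eq_add_of_le hki
    exact hhigh j (by omega)

theorem lowDigitsLeOne_add_pow_mul_iff {k n u v : ℕ} :
    LowDigitsLeOne (k + n) (u + 3 ^ k * v) ↔
      LowDigitsLeOne k u ∧ LowDigitsLeOne n (u / 3 ^ k + v) := by
  rw [lowDigitsLeOne_add_iff, Nat.add_mul_div_left _ _ (by positivity),
    lowDigitsLeOne_congr (Nat.add_mul_mod_self_left u (3 ^ k) v)]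

/-- `a` is the carry into the lowest digit of `a + M * z` from the digits further down. -/
def admissible (M n a : ℕ) : Finset ℕ :=
  (range (3 ^ n)).filter fun z => LowDigitsLeOne n z ∧ LowDigitsLeOne n (a + M * z)

theorem mem_admissible {M n a z : ℕ} :
    z ∈ admissible M n a ↔ z < 3 ^ n ∧ LowDigitsLeOne n z ∧ LowDigitsLeOne n (a + M * z) := by
  rw [admissible, mem_filter, mem_range]

theorem card_admissible_le (M n a : ℕ) : #(admissible M n a) ≤ 3 ^ n :=
  (card_filter_le _ _).trans (card_range _).le

theorem admissible_congr {M M' n a a' : ℕ} (hM : M ≡ M' [MOD 3 ^ n]) (ha : a ≡ a' [MOD 3 ^ n]) :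
    admissible M n a = admissible M' n a' := by
  ext z
  simp only [mem_admissible, lowDigitsLeOne_congr (ha.add (hM.mul_right z))]

theorem add_pow_mul_mem_admissible_add_iff {M k n a x y : ℕ} (hx : x < 3 ^ k) :
    x + 3 ^ k * y ∈ admissible M (k + n) a ↔
      x ∈ admissible M k a ∧ y ∈ admissible M n ((a + M * x) / 3 ^ k) := by
  have hlt : x + 3 ^ k * y < 3 ^ (k + n) ↔ y < 3 ^ n := by
    rw [pow_add]
    constructor <;> intro h <;> nlinarith
  have hMz : a + M * (x + 3 ^ k * y) = (a + M * x) + 3 ^ k * (M * y) := by ring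
  simp only [mem_admissible, hlt, hMz, lowDigitsLeOne_add_pow_mul_iff, Nat.div_eq_of_lt hx,
    zero_add]
  tauto

theorem mem_admissible_add_iff {M k n a z : ℕ} :
    z ∈ admissible M (k + n) a ↔
      z % 3 ^ k ∈ admissible M k a ∧ z / 3 ^ k ∈ admissible M n ((a + M * (z % 3 ^ k)) / 3 ^ k) := by
  conv_lhs => rw [← Nat.mod_add_div z (3 ^ k)]
  exact add_pow_mul_mem_admissible_add_iff (Nat.mod_lt _ (by positivity))

theorem sum_admissible_add {β : Type*} [AddCommMonoid β] (M k n a : ℕ) (f : ℕ → β) :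
    ∑ z ∈ admissible M (k + n) a, f z =
      ∑ x ∈ admissible M k a, ∑ y ∈ admissible M n ((a + M * x) / 3 ^ k), f (x + 3 ^ k * y) := by
  rw [sum_sigma']
  refine sum_nbij' (fun z => ⟨z % 3 ^ k, z / 3 ^ k⟩) (fun p => p.1 + 3 ^ k * p.2)
    (fun z hz => mem_sigma.2 (mem_admissible_add_iff.1 hz))
    (fun p hp => (add_pow_mul_mem_admissible_add_iff (mem_admissible.1 (mem_sigma.1 hp).1).1).2
      (mem_sigma.1 hp)) (fun z _ => Nat.mod_add_div z _) ?_ (fun z _ => by rw [Nat.mod_add_div])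
  rintro ⟨x, y⟩ hp
  have hx : x < 3 ^ k := (mem_admissible.1 (mem_sigma.1 hp).1).1
  simp [Nat.add_mul_div_left _ _ (by positivity : 0 < 3 ^ k), Nat.div_eq_of_lt hx,
    Nat.mod_eq_of_lt hx]

theorem card_admissible_add (M k n a : ℕ) :
    #(admissible M (k + n) a) =
      ∑ x ∈ admissible M k a, #(admissible M n ((a + M * x) / 3 ^ k)) := by
  simpa only [card_eq_sum_ones] using sum_admissible_add M k n a (fun _ => 1)

theorem mem_admissible_one_one {d e : ℕ} : e ∈ admissible 1 1 d ↔ e ≤ 1 ∧ (d + e) % 3 ≤ 1 := by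
  simp only [mem_admissible, lowDigitsLeOne_one, pow_one, one_mul]
  omega

theorem card_admissible_one_one (d : ℕ) : #(admissible 1 1 d) = if 3 ∣ d then 2 else 1 := by
  have hd : admissible 1 1 d = if 3 ∣ d then {0, 1} else if d % 3 = 1 then {0} else {1} := by
    ext e
    rw [mem_admissible_one_one]
    split_ifs <;> simp <;> omega
  rw [hd]
  split_ifs <;> simp

theorem sum_card_admissible_one_one_le {C : ℕ} (hC : ¬ 3 ∣ C) (a b : ℕ) :
    ∑ e ∈ admissible 1 1 a, #(admissible 1 1 (b + C * e)) ≤ 3 := by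
  have hsub : admissible 1 1 a ⊆ {0, 1} := fun e he => by
    have := (mem_admissible_one_one.1 he).1
    simp only [mem_insert, mem_singleton]
    omega
  refine (sum_le_sum_of_subset hsub).trans ?_
  simp only [mem_singleton, zero_ne_one, not_false_eq_true, sum_insert, sum_singleton,
    card_admissible_one_one]
  split_ifs <;> omega

theorem card_admissible_one_one_add (n d : ℕ) :
    #(admissible 1 (1 + n) d) = #(admissible 1 1 d) * #(admissible 1 n ((d + 1) / 3)) := by
  rw [card_admissible_add, ← smul_eq_mul, ← sum_const]
  refine sum_congr rfl fun e he => ?_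
  have := mem_admissible_one_one.1 he
  -- `e = 0` if `d ≡ 1`, `e = 1` if `d ≡ 2`, and either if `d ≡ 0 (mod 3)`
  rw [one_mul, pow_one, show (d + e) / 3 = (d + 1) / 3 by omega]

theorem sum_card_admissible_one_le {C : ℕ} (hC : ¬ 3 ∣ C) (n a b : ℕ) :
    ∑ z ∈ admissible 1 n a, #(admissible 1 n (b + C * z)) ≤ 3 ^ n := by
  induction n generalizing a b with
  | zero => simp [admissible, LowDigitsLeOne]
  | succ n ih =>
    rw [add_comm n 1, sum_admissible_add]
    calc ∑ e ∈ admissible 1 1 a, ∑ y ∈ admissible 1 n ((a + 1 * e) / 3 ^ 1),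
          #(admissible 1 (1 + n) (b + C * (e + 3 ^ 1 * y)))
        = ∑ e ∈ admissible 1 1 a, #(admissible 1 1 (b + C * e)) *
            ∑ y ∈ admissible 1 n ((a + 1 * e) / 3 ^ 1),
              #(admissible 1 n ((b + C * e + 1) / 3 + C * y)) := by
          refine sum_congr rfl fun e _ => ?_
          rw [mul_sum]
          refine sum_congr rfl fun y _ => ?_
          have hcarry : b + C * (e + 3 ^ 1 * y) + 1 = (b + C * e + 1) + 3 * (C * y) := by ring
          have hlow : b + C * (e + 3 ^ 1 * y) ≡ b + C * e [MOD 3 ^ 1] := by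
            rw [show b + C * (e + 3 ^ 1 * y) = b + C * e + 3 ^ 1 * (C * y) by ring]
            exact Nat.add_mul_mod_self_left _ _ _
          rw [card_admissible_one_one_add, hcarry, Nat.add_mul_div_left _ _ (by norm_num),
            admissible_congr (Nat.ModEq.refl 1) hlow]
      _ ≤ ∑ e ∈ admissible 1 1 a, #(admissible 1 1 (b + C * e)) * 3 ^ n :=
          sum_le_sum fun e _ => Nat.mul_le_mul_left _ (ih _ _)
      _ ≤ 3 * 3 ^ n := by
          rw [← sum_mul]
          exact Nat.mul_le_mul_right _ (sum_card_admissible_one_one_le hC a b)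
      _ = 3 ^ (1 + n) := by ring

theorem div_pow_eq_iterate_of_mem_admissible_one {n a z : ℕ} (hz : z ∈ admissible 1 n a) :
    (a + z) / 3 ^ n = (fun d => (d + 1) / 3)^[n] a := by
  induction n generalizing a z with
  | zero => simpa using (mem_admissible.1 hz).1
  | succ n ih =>
    rw [add_comm n 1, mem_admissible_add_iff, pow_one, one_mul] at hz
    obtain ⟨hlow, hhigh⟩ := hz
    have := mem_admissible_one_one.1 hlow
    rw [Function.iterate_succ_apply, ← ih (show (a + z % 3) / 3 = (a + 1) / 3 by omega ▸ hhigh),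
      pow_succ', ← Nat.div_div_eq_div_mul]
    congr 1
    omega

theorem card_admissible_add_self_le {M m C : ℕ} (hM : M = 1 + 3 ^ m * C) (hC : ¬ 3 ∣ C)
    (a : ℕ) : #(admissible M (m + m) a) ≤ 3 ^ m := by
  have hM1 : M ≡ 1 [MOD 3 ^ m] := by
    rw [hM]
    exact Nat.add_mul_mod_self_left _ _ _
  rw [card_admissible_add, admissible_congr hM1 (Nat.ModEq.refl a)]
  calc ∑ z ∈ admissible 1 m a, #(admissible M m ((a + M * z) / 3 ^ m))
      = ∑ z ∈ admissible 1 m a,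
          #(admissible 1 m ((fun d => (d + 1) / 3)^[m] a + C * z)) := by
        refine sum_congr rfl fun z hz => ?_
        rw [admissible_congr hM1 (Nat.ModEq.refl _), ← div_pow_eq_iterate_of_mem_admissible_one hz,
          hM, show a + (1 + 3 ^ m * C) * z = (a + z) + 3 ^ m * (C * z) by ring,
          Nat.add_mul_div_left _ _ (by positivity)]
    _ ≤ 3 ^ m := sum_card_admissible_one_le hC m a ((fun d => (d + 1) / 3)^[m] a)

theorem card_admissible_add_two_mul_le {M m C : ℕ} (hM : M = 1 + 3 ^ m * C) (hC : ¬ 3 ∣ C)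
    (k a : ℕ) : #(admissible M (k + 2 * m) a) ≤ 3 ^ m * #(admissible M k a) := by
  rw [two_mul, card_admissible_add, mul_comm, ← smul_eq_mul, ← sum_const]
  exact sum_le_sum fun x _ => card_admissible_add_self_le hM hC _

theorem card_admissible_le_pow_div_two_add {M m C : ℕ} (hm : 1 ≤ m) (hM : M = 1 + 3 ^ m * C)
    (hC : ¬ 3 ∣ C) (r a : ℕ) : #(admissible M r a) ≤ 3 ^ (r / 2 + m) := by
  induction r using Nat.strong_induction_on with
  | _ r ih =>
    by_cases hr : r < 2 * m
    · exact (card_admissible_le M r a).trans (Nat.pow_le_pow_right (by norm_num) (by omega))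
    · obtain ⟨k, rfl⟩ := Nat.exists_eq_add_of_le' (not_lt.1 hr)
      calc #(admissible M (k + 2 * m) a) ≤ 3 ^ m * #(admissible M k a) :=
            card_admissible_add_two_mul_le hM hC k a
        _ ≤ 3 ^ m * 3 ^ (k / 2 + m) := Nat.mul_le_mul_left _ (ih k (by omega))
        _ = 3 ^ ((k + 2 * m) / 2 + m) := by
            rw [← pow_add]
            congr 1
            omega

end TernaryZeroOne

open TernaryZeroOne

theorem exists_eq_one_add_pow_mul_of_digits {M m : ℕ} (hM1 : M % 3 = 1) (hm : 1 ≤ m)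
    (hmdig : (Nat.digits 3 M).getD m 0 ≠ 0)
    (hmlow : ∀ i, 0 < i → i < m → (Nat.digits 3 M).getD i 0 = 0) :
    ∃ C, M = 1 + 3 ^ m * C ∧ ¬ 3 ∣ C := by
  obtain ⟨k, rfl⟩ := Nat.exists_eq_add_of_le' hm
  have hmod : ∀ j ≤ k, M % 3 ^ (j + 1) = 1 := by
    intro j hj
    induction j with
    | zero => simpa using hM1
    | succ j ih =>
      have hdig := hmlow (j + 1) j.succ_pos (by omega)
      rw [Nat.getD_digits _ _ (by norm_num)] at hdig
      rw [Nat.mod_pow_succ, ih (by omega), hdig, mul_zero, add_zero]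
  refine ⟨M / 3 ^ (k + 1), ?_, ?_⟩
  · have h := Nat.mod_add_div M (3 ^ (k + 1))
    rw [hmod k le_rfl] at h
    exact h.symm
  · rwa [Nat.dvd_iff_mod_eq_zero, ← Nat.getD_digits _ _ (by norm_num)]

theorem padicDigit_eq_of_toZModPow_eq {y : ℤ_[3]} {r n i : ℕ} (hi : i < r)
    (h : PadicInt.toZModPow r y = n) : padicDigit y i = n / 3 ^ i % 3 := by
  have happr : (y.appr (i + 1) : ZMod (3 ^ (i + 1))) = n := by
    change PadicInt.toZModPow (i + 1) y = n
    rw [← PadicInt.cast_toZModPow (i + 1) r hi y, h, ZMod.cast_natCast (pow_dvd_pow 3 hi)]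
  have hval := congrArg ZMod.val happr
  rw [ZMod.val_natCast, ZMod.val_natCast, Nat.mod_eq_of_lt (PadicInt.appr_lt _ _)] at hval
  rw [padicDigit, hval, pow_succ, Nat.mod_mul_right_div_self, Nat.mod_mod]

theorem toZModPow_mem_image_admissible {M r : ℕ} {lam : ℤ_[3]}
    (hlam : ∀ j, padicDigit lam j ≤ 1) (hMlam : ∀ j, padicDigit ((M : ℤ_[3]) * lam) j ≤ 1) :
    PadicInt.toZModPow r lam ∈ (admissible M r 0).image (Nat.cast : ℕ → ZMod (3 ^ r)) := by
  set x := (PadicInt.toZModPow r lam).val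
  have hx : PadicInt.toZModPow r lam = x := (ZMod.natCast_zmod_val _).symm
  have hMx : PadicInt.toZModPow r ((M : ℤ_[3]) * lam) = (M * x : ℕ) := by
    rw [map_mul, map_natCast, hx, Nat.cast_mul]
  refine mem_image.2 ⟨x, mem_admissible.2 ⟨ZMod.val_lt _, fun i hi => ?_, fun i hi => ?_⟩, hx.symm⟩
  · rw [← padicDigit_eq_of_toZModPow_eq hi hx]
    exact hlam i
  · rw [zero_add, ← padicDigit_eq_of_toZModPow_eq hi hMx]
    exact hMlam i

theorem admissible_residue_count_bound_general (M : ℕ) (hM1 : M % 3 = 1)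
    (m : ℕ) (hm : 1 ≤ m)
    (hmdig : (Nat.digits 3 M).getD m 0 ≠ 0)
    (hmlow : ∀ i, 0 < i → i < m → (Nat.digits 3 M).getD i 0 = 0)
    (r : ℕ) :
    ({c : ZMod (3 ^ r) | ∃ lam : ℤ_[3],
        (∀ j, padicDigit lam j ≤ 1) ∧
        (∀ j, padicDigit ((M : ℤ_[3]) * lam) j ≤ 1) ∧
        PadicInt.toZModPow r lam = c}.ncard : ℝ)
      ≤ (3 : ℝ) ^ ((r : ℝ) / 2 + 2 * m) := by
  obtain ⟨C, hMC, hC⟩ := exists_eq_one_add_pow_mul_of_digits hM1 hm hmdig hmlow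
  calc _ ≤ (#((admissible M r 0).image (Nat.cast : ℕ → ZMod (3 ^ r))) : ℝ) := by
        rw [← Set.ncard_coe_finset]
        refine Nat.cast_le.2 (Set.ncard_le_ncard ?_ (finite_toSet _))
        rintro _ ⟨lam, hlam, hMlam, rfl⟩
        exact toZModPow_mem_image_admissible hlam hMlam
    _ ≤ (#(admissible M r 0) : ℝ) := Nat.cast_le.2 card_image_le
    _ ≤ (3 : ℝ) ^ (r / 2 + m) := by
        exact_mod_cast card_admissible_le_pow_div_two_add hm hMC hC r 0
    _ = (3 : ℝ) ^ ((r / 2 + m : ℕ) : ℝ) := (Real.rpow_natCast _ _).symm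
    _ ≤ (3 : ℝ) ^ ((r : ℝ) / 2 + 2 * m) := by
        refine Real.rpow_le_rpow_of_exponent_le (by norm_num) ?_
        have : ((r / 2 : ℕ) : ℝ) ≤ r / 2 := Nat.cast_div_le
        push_cast
        linarith [(Nat.cast_nonneg m : (0 : ℝ) ≤ m)]

theorem admissible_residue_count_bound (M : ℕ) (hM : 1 < M) (hM3 : ¬ 3 ∣ M)
    (hM1 : M % 3 = 1) (hMpow : ∀ j : ℕ, M ≠ 3 ^ j)
    (m : ℕ) (hm : 1 ≤ m)
    (hmdig : (Nat.digits 3 M).getD m 0 ≠ 0)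
    (hmlow : ∀ i, 0 < i → i < m → (Nat.digits 3 M).getD i 0 = 0)
    (r : ℕ) (hr : 2 * m ≤ r) :
    ({c : ZMod (3 ^ r) | ∃ lam : ℤ_[3],
        (∀ j, padicDigit lam j ≤ 1) ∧
        (∀ j, padicDigit ((M : ℤ_[3]) * lam) j ≤ 1) ∧
        PadicInt.toZModPow r lam = c}.ncard : ℝ)
      ≤ (3 : ℝ) ^ ((r : ℝ) / 2 + 2 * m) :=
  admissible_residue_count_bound_general M hM1 m hm hmdig hmlow r
end
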